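/- For all k, ℓ ∈ ℤ² ∖ {(0,0)} and all x ∈ ℝ², with a = (k₂ℓ₁ − k₁ℓ₂)/(|k||ℓ|), one has the expansion 𝒥^{0,1}_{k,ℓ}(x) = (a/2)·cos((k+ℓ)·x)·(k₂ − ℓ₂, ℓ₁ − k₁) + (a/2)·cos((k−ℓ)·x)·(−(k₂ + ℓ₂), k₁ + ℓ₁). -/

import Mathlib

/-- Euclidean norm of an integer vector. -/
noncomputable def znorm (k : ℤ × ℤ) : ℝ := Real.sqrt ((k.1 : ℝ) ^ 2 + (k.2 : ℝ) ^ 2)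

/-- The pairing `k · x = k₁x₁ + k₂x₂`. -/
noncomputable def kdot (k : ℤ × ℤ) (x : ℝ × ℝ) : ℝ := (k.1 : ℝ) * x.1 + (k.2 : ℝ) * x.2

/-- The vector field `e_k^0(x) = (k₂/|k|, −k₁/|k|)·cos(k·x)`. -/
noncomputable def e0 (k : ℤ × ℤ) : ℝ × ℝ → ℝ × ℝ := fun x =>
  (((k.2 : ℝ) / znorm k) * Real.cos (kdot k x), (-(k.1 : ℝ) / znorm k) * Real.cos (kdot k x))

/-- The vector field `e_k^1(x) = (−k₂/|k|, k₁/|k|)·sin(k·x)`. -/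
noncomputable def e1 (k : ℤ × ℤ) : ℝ × ℝ → ℝ × ℝ := fun x =>
  ((-(k.2 : ℝ) / znorm k) * Real.sin (kdot k x), ((k.1 : ℝ) / znorm k) * Real.sin (kdot k x))

/-- The advection `b(u,v) = (u·∇)v`, i.e. the derivative of `v` in the direction `u`. -/
noncomputable def adv (u v : ℝ × ℝ → ℝ × ℝ) : ℝ × ℝ → ℝ × ℝ := fun x => fderiv ℝ v x (u x)

/-- The `L²` pairing `⟨f,g⟩ = ∫_{[−π,π]²} f(x)·g(x) dx`. -/
noncomputable def pairL2 (f g : ℝ × ℝ → ℝ × ℝ) : ℝ :=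
  ∫ x in Set.Icc ((-Real.pi, -Real.pi) : ℝ × ℝ) ((Real.pi, Real.pi) : ℝ × ℝ),
    ((f x).1 * (g x).1 + (f x).2 * (g x).2)

/-- `𝒥^{0,1}_{k,ℓ} = b(e_k^0, e_ℓ^1) + b(e_ℓ^1, e_k^0)`. -/
noncomputable def J01 (k l : ℤ × ℤ) : ℝ × ℝ → ℝ × ℝ := fun x =>
  adv (e0 k) (e1 l) x + adv (e1 l) (e0 k) x

/-- `𝒥^{0,0}_{k,ℓ} = b(e_k^0, e_ℓ^0) + b(e_ℓ^0, e_k^0)`. -/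
noncomputable def J00 (k l : ℤ × ℤ) : ℝ × ℝ → ℝ × ℝ := fun x =>
  adv (e0 k) (e0 l) x + adv (e0 l) (e0 k) x

/-- `𝒥^{1,1}_{k,ℓ} = b(e_k^1, e_ℓ^1) + b(e_ℓ^1, e_k^1)`. -/
noncomputable def J11 (k l : ℤ × ℤ) : ℝ × ℝ → ℝ × ℝ := fun x =>
  adv (e1 k) (e1 l) x + adv (e1 l) (e1 k) x

/-- `𝒵^{0,1}_{k,ℓ} = b(e_k^0, e_ℓ^1) − b(e_ℓ^1, e_k^0)`. -/
noncomputable def Z01 (k l : ℤ × ℤ) : ℝ × ℝ → ℝ × ℝ := fun x =>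
  adv (e0 k) (e1 l) x - adv (e1 l) (e0 k) x

/-- `𝒵^{0,0}_{k,ℓ} = b(e_k^0, e_ℓ^0) − b(e_ℓ^0, e_k^0)`. -/
noncomputable def Z00 (k l : ℤ × ℤ) : ℝ × ℝ → ℝ × ℝ := fun x =>
  adv (e0 k) (e0 l) x - adv (e0 l) (e0 k) x

/-- `𝒵^{1,1}_{k,ℓ} = b(e_k^1, e_ℓ^1) − b(e_ℓ^1, e_k^1)`. -/
noncomputable def Z11 (k l : ℤ × ℤ) : ℝ × ℝ → ℝ × ℝ := fun x =>
  adv (e1 k) (e1 l) x - adv (e1 l) (e1 k) x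

lemma znorm_ne_zero (k : ℤ × ℤ) (hk : k ≠ (0, 0)) : znorm k ≠ 0 := by
  have h : (k.1 : ℝ) ^ 2 + (k.2 : ℝ) ^ 2 ≠ 0 := by
    intro h
    have h1 : (k.1 : ℝ) = 0 ∧ (k.2 : ℝ) = 0 := by
      constructor <;> nlinarith [sq_nonneg (k.1 : ℝ), sq_nonneg (k.2 : ℝ)]
    apply hk
    have : k.1 = 0 := by exact_mod_cast h1.1
    have : k.2 = 0 := by exact_mod_cast h1.2
    exact Prod.ext (by exact_mod_cast h1.1) (by exact_mod_cast h1.2)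
  simp only [znorm]
  intro hz
  exact h (by nlinarith [Real.sq_sqrt (by positivity : (0:ℝ) ≤ (k.1 : ℝ) ^ 2 + (k.2 : ℝ) ^ 2), hz])

noncomputable def kdotL (k : ℤ × ℤ) : ℝ × ℝ →L[ℝ] ℝ :=
  (k.1 : ℝ) • (ContinuousLinearMap.fst ℝ ℝ ℝ) + (k.2 : ℝ) • (ContinuousLinearMap.snd ℝ ℝ ℝ)

lemma kdotL_apply (k : ℤ × ℤ) (v : ℝ × ℝ) : kdotL k v = kdot k v := by
  simp [kdotL, kdot, smul_eq_mul]

lemma hasFDerivAt_kdot (k : ℤ × ℤ) (x : ℝ × ℝ) : HasFDerivAt (kdot k) (kdotL k) x := by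
  have h : kdot k = fun v => kdotL k v := by
    funext v; rw [kdotL_apply]
  rw [h]
  exact (kdotL k).hasFDerivAt

lemma adv_e1 (l : ℤ × ℤ) (u : ℝ × ℝ → ℝ × ℝ) (x : ℝ × ℝ) :
    adv u (e1 l) x =
      (((-(l.2 : ℝ) / znorm l) * Real.cos (kdot l x)) * kdot l (u x),
       (((l.1 : ℝ) / znorm l) * Real.cos (kdot l x)) * kdot l (u x)) := by
  have hL := hasFDerivAt_kdot l x
  have h1 : HasFDerivAt (fun y => (-(l.2 : ℝ) / znorm l) * Real.sin (kdot l y))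
      (((-(l.2 : ℝ) / znorm l) * Real.cos (kdot l x)) • kdotL l) x := by
    simpa [smul_smul] using (hL.sin).const_mul (-(l.2 : ℝ) / znorm l)
  have h2 : HasFDerivAt (fun y => ((l.1 : ℝ) / znorm l) * Real.sin (kdot l y))
      ((((l.1 : ℝ) / znorm l) * Real.cos (kdot l x)) • kdotL l) x := by
    simpa [smul_smul] using (hL.sin).const_mul ((l.1 : ℝ) / znorm l)
  have hD : HasFDerivAt (e1 l) _ x := HasFDerivAt.prodMk h1 h2
  simp only [adv, hD.fderiv]
  simp [kdotL_apply, smul_eq_mul, mul_assoc]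

lemma adv_e0 (k : ℤ × ℤ) (u : ℝ × ℝ → ℝ × ℝ) (x : ℝ × ℝ) :
    adv u (e0 k) x =
      ((((k.2 : ℝ) / znorm k) * (-Real.sin (kdot k x))) * kdot k (u x),
       ((-(k.1 : ℝ) / znorm k) * (-Real.sin (kdot k x))) * kdot k (u x)) := by
  have hL := hasFDerivAt_kdot k x
  have h1 : HasFDerivAt (fun y => ((k.2 : ℝ) / znorm k) * Real.cos (kdot k y))
      (-((((k.2 : ℝ) / znorm k) * Real.sin (kdot k x)) • kdotL k)) x := by
    simpa [smul_smul] using (hL.cos).const_mul ((k.2 : ℝ) / znorm k)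
  have h2 : HasFDerivAt (fun y => (-(k.1 : ℝ) / znorm k) * Real.cos (kdot k y))
      (-(((-(k.1 : ℝ) / znorm k) * Real.sin (kdot k x)) • kdotL k)) x := by
    simpa [smul_smul] using (hL.cos).const_mul (-(k.1 : ℝ) / znorm k)
  have hD : HasFDerivAt (e0 k) _ x := HasFDerivAt.prodMk h1 h2
  simp only [adv, hD.fderiv, ContinuousLinearMap.prod_apply, ContinuousLinearMap.neg_apply,
    ContinuousLinearMap.smul_apply, kdotL_apply, smul_eq_mul, Prod.mk.injEq]
  constructor <;> ring

theorem J01_expansion (k l : ℤ × ℤ) (hk : k ≠ (0, 0)) (hl : l ≠ (0, 0))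
    (a : ℝ) (ha : a = ((k.2 : ℝ) * (l.1 : ℝ) - (k.1 : ℝ) * (l.2 : ℝ)) / (znorm k * znorm l))
    (x : ℝ × ℝ) :
    J01 k l x =
      ((a / 2) * Real.cos (kdot (k + l) x) * ((k.2 : ℝ) - (l.2 : ℝ)),
       (a / 2) * Real.cos (kdot (k + l) x) * ((l.1 : ℝ) - (k.1 : ℝ))) +
      ((a / 2) * Real.cos (kdot (k - l) x) * (-((k.2 : ℝ) + (l.2 : ℝ))),
       (a / 2) * Real.cos (kdot (k - l) x) * ((k.1 : ℝ) + (l.1 : ℝ))) := by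
  have hknz := znorm_ne_zero k hk
  have hlnz := znorm_ne_zero l hl
  have hadd : kdot (k + l) x = kdot k x + kdot l x := by
    simp [kdot]; push_cast; ring
  have hsub : kdot (k - l) x = kdot k x - kdot l x := by
    simp [kdot]; push_cast; ring
  have hca : Real.cos (kdot (k + l) x) =
      Real.cos (kdot k x) * Real.cos (kdot l x) - Real.sin (kdot k x) * Real.sin (kdot l x) := by
    rw [hadd, Real.cos_add]
  have hcs : Real.cos (kdot (k - l) x) =
      Real.cos (kdot k x) * Real.cos (kdot l x) + Real.sin (kdot k x) * Real.sin (kdot l x) := by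
    rw [hsub, Real.cos_sub]
  simp only [J01, adv_e0, adv_e1, hca, hcs, ha, Prod.mk_add_mk, Prod.mk.injEq]
  have he0 : kdot l (e0 k x) = ((l.1 : ℝ) * ((k.2 : ℝ) / znorm k) + (l.2 : ℝ) * (-(k.1 : ℝ) / znorm k)) * Real.cos (kdot k x) := by
    simp [kdot, e0]; ring
  have he1 : kdot k (e1 l x) = ((k.1 : ℝ) * (-(l.2 : ℝ) / znorm l) + (k.2 : ℝ) * ((l.1 : ℝ) / znorm l)) * Real.sin (kdot l x) := by
    simp [kdot, e1]; ring
  rw [he0, he1]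
  constructor <;> field_simp <;> ring
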